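/- Let G = SU(r) with r ≥ 3, let C_1 be the conjugacy class of exp(2πi·diag(ω_1/2)) and C_2 that of exp(2πi·diag(ω_2/2)), where ω_1, ω_2 are the first two fundamental coweight vertices. Then C_2 ⊆ C_1 · C_1; that is, there exist g_1, g_2 ∈ C_1 with g_1 g_2 ∈ C_2. -/

import Mathlib

open Matrix

/-- The special unitary group SU(r), realized as the subgroup of the unitary group
consisting of matrices of determinant one. -/
def SU (r : ℕ) : Subgroup (Matrix.unitaryGroup (Fin r) ℂ) where
  carrier := {g | (g : Matrix (Fin r) (Fin r) ℂ).det = 1}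
  one_mem' := by simp
  mul_mem' := by
    intro a b ha hb
    simp only [Set.mem_setOf_eq] at *
    have h : ((a * b : Matrix.unitaryGroup (Fin r) ℂ) : Matrix (Fin r) (Fin r) ℂ)
        = (a : Matrix (Fin r) (Fin r) ℂ) * b := rfl
    rw [h, Matrix.det_mul, ha, hb, one_mul]
  inv_mem' := by
    intro a ha
    simp only [Set.mem_setOf_eq] at *
    have h1 : ((a⁻¹ : Matrix.unitaryGroup (Fin r) ℂ) : Matrix (Fin r) (Fin r) ℂ) *
        (a : Matrix (Fin r) (Fin r) ℂ) = 1 := by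
      have h : ((a⁻¹ * a : Matrix.unitaryGroup (Fin r) ℂ) : Matrix (Fin r) (Fin r) ℂ)
          = ((a⁻¹ : Matrix.unitaryGroup (Fin r) ℂ) : Matrix (Fin r) (Fin r) ℂ) *
            (a : Matrix (Fin r) (Fin r) ℂ) := rfl
      rw [← h, inv_mul_cancel a]; rfl
    have h2 := congrArg Matrix.det h1
    rw [Matrix.det_mul, ha, mul_one, Matrix.det_one] at h2
    exact h2

/-- The matrix of an element of `SU r`. -/
def SU.mat {r : ℕ} (g : SU r) : Matrix (Fin r) (Fin r) ℂ :=
  ((g : Matrix.unitaryGroup (Fin r) ℂ) : Matrix (Fin r) (Fin r) ℂ)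

/-!
Take `g₁ = exp(πi·diag ω₁)` and let `g₂` be its conjugate by the permutation matrix of the
transposition `s₁ = (0 1)`, that is `g₂ = exp(πi·diag(s₁ω₁))`. Both are diagonal, so
`g₁g₂ = exp(πi·diag(ω₁ + s₁ω₁))`, and `ω₁ + s₁ω₁ = ω₂`. Conjugacy in `U(r)` of diagonal
matrices already gives conjugacy in `SU(r)`, because the determinant can be corrected by a
diagonal unitary, which commutes with them.
-/

open Complex

theorem Complex.exp_ofReal_mul_I_mem_unitary (x : ℝ) : exp (x * I) ∈ unitary ℂ := by
  have h : star (exp (x * I)) = exp (-(x * I)) := by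
    rw [star_def, ← exp_conj]
    simp
  rw [Unitary.mem_iff_star_mul_self, h, ← exp_add, neg_add_cancel, exp_zero]

namespace Matrix

variable {n α : Type*} [Fintype n] [DecidableEq n] [CommRing α] [StarRing α]

theorem diagonal_mem_unitaryGroup {d : n → α} (hd : ∀ i, d i ∈ unitary α) :
    diagonal d ∈ unitaryGroup n α := by
  rw [mem_unitaryGroup_iff, star_eq_conjTranspose, diagonal_conjTranspose,
    diagonal_mul_diagonal, ← diagonal_one]
  exact congrArg diagonal (funext fun i => Unitary.mul_star_self_of_mem (hd i))

theorem permMatrix_mem_unitaryGroup (σ : Equiv.Perm n) : σ.permMatrix α ∈ unitaryGroup n α := by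
  rw [mem_unitaryGroup_iff, star_eq_conjTranspose, conjTranspose_permMatrix, ← permMatrix_mul,
    inv_mul_cancel, permMatrix_one]

theorem permMatrix_mul_diagonal_mul_conjTranspose (σ : Equiv.Perm n) (d : n → α) :
    σ.permMatrix α * diagonal d * (σ.permMatrix α)ᴴ = diagonal (d ∘ σ) := by
  rw [conjTranspose_permMatrix, PEquiv.toMatrix_toPEquiv_mul, PEquiv.mul_toMatrix_toPEquiv,
    submatrix_submatrix]
  exact submatrix_diagonal_equiv d σ

end Matrix

namespace SU

variable {r : ℕ}

theorem mat_injective : Function.Injective (SU.mat (r := r)) :=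
  fun _ _ h => Subtype.ext (Subtype.ext h)

theorem mat_mul (a b : SU r) : SU.mat (a * b) = SU.mat a * SU.mat b := rfl

theorem isConj_iff_exists_mat {g h : SU r} :
    IsConj g h ↔ ∃ u : SU r, SU.mat h = SU.mat u * SU.mat g * SU.mat u⁻¹ := by
  simp only [isConj_iff, ← mat_injective.eq_iff, mat_mul, eq_comm]

/-- Correcting `U` by the diagonal unitary `diag(det U⁻¹, 1, …, 1)`, which commutes with every
diagonal matrix, moves it into `SU r`. -/
theorem exists_mat_mul_diagonal_mul_mat_inv [NeZero r] {U : Matrix (Fin r) (Fin r) ℂ}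
    (hU : U ∈ unitaryGroup (Fin r) ℂ) (d : Fin r → ℂ) :
    ∃ u : SU r, SU.mat u * diagonal d * SU.mat u⁻¹ = U * diagonal d * star U := by
  have hdetU := det_of_mem_unitary hU
  set E := diagonal (Function.update (1 : Fin r → ℂ) 0 (star U.det))
  have hE : E ∈ unitaryGroup (Fin r) ℂ := by
    refine diagonal_mem_unitaryGroup fun i => ?_
    rcases eq_or_ne i 0 with rfl | hi
    · simpa using Unitary.star_mem hdetU
    · simp [Function.update_of_ne hi]
  have hdet : (U * E).det = 1 := by
    rw [det_mul, det_diagonal, Finset.prod_update_of_mem (Finset.mem_univ 0)]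
    simpa using Unitary.mul_star_self_of_mem hdetU
  refine ⟨⟨⟨U * E, mul_mem hU hE⟩, hdet⟩, ?_⟩
  have hcomm : E * diagonal d = diagonal d * E := by
    simp only [E, diagonal_mul_diagonal, mul_comm]
  change U * E * diagonal d * star (U * E) = U * diagonal d * star U
  calc U * E * diagonal d * star (U * E) = U * diagonal d * (E * star E) * star U := by
        simp only [star_mul, mul_assoc]
        rw [← mul_assoc E, hcomm, mul_assoc]
    _ = U * diagonal d * star U := by rw [mem_unitaryGroup_iff.mp hE, mul_one]

/-- `exp(πi·diag f)`; the trace condition `∑ f = 0` makes its determinant `1`. -/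
noncomputable def expDiagonal (f : Fin r → ℝ) (hf : ∑ j, f j = 0) : SU r :=
  ⟨⟨diagonal fun j => exp (Real.pi * I * f j), diagonal_mem_unitaryGroup fun j => by
      simpa only [ofReal_mul, mul_right_comm] using exp_ofReal_mul_I_mem_unitary (Real.pi * f j)⟩,
    by
      change (diagonal _).det = 1
      rw [det_diagonal, ← exp_sum, ← Finset.mul_sum, ← ofReal_sum, hf, ofReal_zero, mul_zero,
        exp_zero]⟩

theorem mat_expDiagonal (f : Fin r → ℝ) (hf : ∑ j, f j = 0) :
    SU.mat (expDiagonal f hf) = diagonal fun j => exp (Real.pi * I * f j) := rfl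

theorem expDiagonal_mul {f g h : Fin r → ℝ} (hf : ∑ j, f j = 0) (hg : ∑ j, g j = 0)
    (hh : ∑ j, h j = 0) (hfg : f + g = h) :
    expDiagonal f hf * expDiagonal g hg = expDiagonal h hh := by
  subst hfg
  apply mat_injective
  simp only [mat_mul, mat_expDiagonal, diagonal_mul_diagonal, ← exp_add, Pi.add_apply, ofReal_add,
    mul_add]

theorem isConj_expDiagonal_comp_perm [NeZero r] (f : Fin r → ℝ) (hf : ∑ j, f j = 0)
    (σ : Equiv.Perm (Fin r)) :
    IsConj (expDiagonal f hf) (expDiagonal (f ∘ σ) ((Equiv.sum_comp σ f).trans hf)) := by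
  obtain ⟨u, hu⟩ := exists_mat_mul_diagonal_mul_mat_inv (permMatrix_mem_unitaryGroup (α := ℂ) σ)
    fun j => exp (Real.pi * I * f j)
  refine isConj_iff_exists_mat.2 ⟨u, ?_⟩
  rw [mat_expDiagonal, mat_expDiagonal, hu, star_eq_conjTranspose,
    permMatrix_mul_diagonal_mul_conjTranspose]
  rfl

theorem isConj_expDiagonal_iff {f : Fin r → ℝ} {hf : ∑ j, f j = 0} {g : SU r} :
    IsConj (expDiagonal f hf) g ↔ ∃ u : SU r,
      SU.mat g = SU.mat u * diagonal (fun j => exp (Real.pi * I * f j)) * SU.mat u⁻¹ := by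
  rw [isConj_iff_exists_mat, mat_expDiagonal]

end SU

noncomputable def fundCoweight (r k : ℕ) (j : Fin r) : ℝ :=
  if (j : ℕ) < k then ((r : ℝ) - k) / r else -(k / r)

theorem fundCoweight_eq {r : ℕ} (k : ℕ) (j : Fin r) :
    fundCoweight r k j = (if (j : ℕ) < k then 1 else 0) - k / r := by
  have hr : (r : ℝ) ≠ 0 := Nat.cast_ne_zero.2 j.pos.ne'
  unfold fundCoweight
  split_ifs
  · rw [sub_div, div_self hr]
  · rw [zero_sub]

theorem sum_fundCoweight {r k : ℕ} (hk : k ≤ r) : ∑ j : Fin r, fundCoweight r k j = 0 := by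
  rcases r.eq_zero_or_pos with rfl | hr
  · simp
  simp only [fundCoweight_eq, Finset.sum_sub_distrib, Finset.sum_boole, Fin.card_filter_val_lt,
    min_eq_right hk, Finset.sum_const, Finset.card_univ, Fintype.card_fin, nsmul_eq_mul]
  field_simp
  ring

/-- For `i = 1` this is `ω₂ = ω₁ + s₁ω₁ = 2ω₁ - α₁`. -/
theorem fundCoweight_add_fundCoweight_one_swap {r : ℕ} [NeZero r] (i j : Fin r) :
    fundCoweight r i j + fundCoweight r 1 (Equiv.swap 0 i j) = fundCoweight r (i + 1) j := by
  have hswap : (Equiv.swap 0 i j : ℕ) < 1 ↔ (j : ℕ) = i := by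
    rw [Nat.lt_one_iff, ← Fin.val_zero r, Fin.val_inj, Fin.val_inj, Equiv.swap_apply_eq_iff,
      Equiv.swap_apply_left]
  have hind : (if (j : ℕ) < i then (1 : ℝ) else 0) + (if (Equiv.swap 0 i j : ℕ) < 1 then 1 else 0)
      = if (j : ℕ) < i + 1 then 1 else 0 := by
    simp only [hswap]
    split_ifs <;> first | omega | norm_num
  simp only [fundCoweight_eq, ← hind]
  push_cast
  ring

/-- For SU(r), r ≥ 3, with C_1 the conjugacy class of exp(2πi·diag(ω_1/2))
and C_2 that of exp(2πi·diag(ω_2/2)), one has C_2 ⊆ C_1·C_1: there exist g_1, g_2 ∈ C_1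
with g_1 g_2 ∈ C_2. -/
theorem class_two_in_square_of_class_one (r : ℕ) (hr : 3 ≤ r)
    (ω₁ ω₂ : Fin r → ℝ)
    (hω₁ : ∀ j : Fin r, ω₁ j = if (j : ℕ) = 0 then ((r : ℝ) - 1) / r else -(1 / r))
    (hω₂ : ∀ j : Fin r, ω₂ j = if (j : ℕ) < 2 then ((r : ℝ) - 2) / r else -(2 / r))
    (C₁ C₂ : Set (SU r))
    (hC₁ : C₁ = {g : SU r | ∃ u : SU r, SU.mat g =
      SU.mat u * Matrix.diagonal (fun j => Complex.exp (Real.pi * Complex.I * ω₁ j)) *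
        SU.mat u⁻¹})
    (hC₂ : C₂ = {g : SU r | ∃ u : SU r, SU.mat g =
      SU.mat u * Matrix.diagonal (fun j => Complex.exp (Real.pi * Complex.I * ω₂ j)) *
        SU.mat u⁻¹}) :
    ∃ g₁ ∈ C₁, ∃ g₂ ∈ C₁, g₁ * g₂ ∈ C₂ := by
  have : NeZero r := ⟨by omega⟩
  have hω₁' : ω₁ = fundCoweight r 1 := funext fun j => by simp [hω₁, fundCoweight]
  have hω₂' : ω₂ = fundCoweight r 2 := funext fun j => by simp [hω₂, fundCoweight]
  subst hω₁' hω₂' hC₁ hC₂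
  let i : Fin r := ⟨1, by omega⟩
  have hsum₁ : ∑ j, fundCoweight r 1 j = 0 := sum_fundCoweight (by omega)
  have hsum₂ : ∑ j, fundCoweight r 2 j = 0 := sum_fundCoweight (by omega)
  have hadd : fundCoweight r 1 + fundCoweight r 1 ∘ Equiv.swap 0 i = fundCoweight r 2 :=
    funext (fundCoweight_add_fundCoweight_one_swap i)
  refine ⟨_, SU.isConj_expDiagonal_iff.1 (IsConj.refl (SU.expDiagonal _ hsum₁)), _,
    SU.isConj_expDiagonal_iff.1 (SU.isConj_expDiagonal_comp_perm _ hsum₁ (Equiv.swap 0 i)), ?_⟩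
  rw [SU.expDiagonal_mul _ _ hsum₂ hadd]
  exact SU.isConj_expDiagonal_iff.1 (IsConj.refl (SU.expDiagonal _ hsum₂))
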